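/- Let A be a finite alphabet, let γ = [n_a]_{a∈A} be a composition with Σ_a n_a = n ≥ 1, let Q be the n-type Q(a) = n_a / n, and let w be a natural number. Define Δk = max_{c ∈ T_γ} Σ_{i=0}^{n−1} log₂(1 + 2^{−w} / P(c_{i+1} | c₁^i)) and k_FPA = ⌊log₂ |T_γ| − Δk⌋. Then the matching rate R = k_FPA / n satisfies R ≤ H(Q) − log₂(1 + 2^{−w}), where H(Q) = −Σ_{a∈A, Q(a)>0} Q(a) log₂ Q(a). -/

import Mathlib

/-- Number of occurrences of symbol `a` among the first `i` entries of `c`. -/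
def prefCount {A : Type*} [DecidableEq A] {n : ℕ} (c : Fin n → A) (i : Fin n) (a : A) : ℕ :=
  (Finset.univ.filter (fun j : Fin n => j < i ∧ c j = a)).card

/-- The FPA dilation sum `S(c) = Σᵢ log₂(1 + 2^{−w} / P(c_{i+1}|c₁^i))` with CCDM
    branching probabilities `P(c_{i+1}|c₁^i) = (n_{c_{i+1}} − n_{c_{i+1}}(c₁^i))/(n − i)`. -/
noncomputable def fpaSum {A : Type*} [DecidableEq A] {n : ℕ} (γ : A → ℕ) (w : ℕ)
    (c : Fin n → A) : ℝ :=
  ∑ i : Fin n, Real.logb 2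
    (1 + ((2 : ℝ) ^ w)⁻¹ /
      (((γ (c i) : ℝ) - (prefCount c i (c i) : ℝ)) / ((n : ℝ) - (i : ℕ))))

/-- The type class `T_γ` of sequences of length `n` with composition `γ`. -/
def typeClass {A : Type*} [Fintype A] [DecidableEq A] (n : ℕ) (γ : A → ℕ) :
    Finset (Fin n → A) :=
  Finset.univ.filter (fun c => ∀ a, (Finset.univ.filter (fun i => c i = a)).card = γ a)

section aux
variable {A : Type*} [Fintype A] [DecidableEq A] {n : ℕ} {γ : A → ℕ}

lemma typeClass_count {c : Fin n → A} (hc : c ∈ typeClass n γ) (a : A) :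
    (Finset.univ.filter fun i => c i = a).card = γ a :=
  (Finset.mem_filter.mp hc).2 a

lemma prefCount_lt {c : Fin n → A} (hc : c ∈ typeClass n γ) (i : Fin n) :
    prefCount c i (c i) < γ (c i) := by
  rw [← typeClass_count hc (c i)]
  have hsub : insert i (Finset.univ.filter (fun j : Fin n => j < i ∧ c j = c i)) ⊆
      Finset.univ.filter fun j => c j = c i := by
    intro j hj
    rcases Finset.mem_insert.mp hj with h | h
    · subst h; simp
    · simp only [Finset.mem_filter] at h ⊢; exact ⟨h.1, h.2.2⟩
  have hnotmem : i ∉ Finset.univ.filter (fun j : Fin n => j < i ∧ c j = c i) := by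
    simp [lt_irrefl]
  have := Finset.card_le_card hsub
  rw [Finset.card_insert_of_notMem hnotmem] at this
  simpa [prefCount] using this

lemma γ_le_prefCount_add {c : Fin n → A} (hc : c ∈ typeClass n γ) (i : Fin n) :
    γ (c i) ≤ prefCount c i (c i) + (n - (i : ℕ)) := by
  rw [← typeClass_count hc (c i)]
  have hsub : (Finset.univ.filter fun j : Fin n => c j = c i) ⊆
      (Finset.univ.filter (fun j : Fin n => j < i ∧ c j = c i)) ∪ Finset.Ici i := by
    intro j hj
    simp only [Finset.mem_filter, Finset.mem_union, Finset.mem_Ici] at hj ⊢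
    rcases lt_or_ge j i with h | h
    · exact Or.inl ⟨hj.1, h, hj.2⟩
    · exact Or.inr h
  calc (Finset.univ.filter fun j : Fin n => c j = c i).card
      ≤ _ := Finset.card_le_card hsub
    _ ≤ _ + (Finset.Ici i).card := Finset.card_union_le _ _
    _ = prefCount c i (c i) + (n - (i : ℕ)) := by rw [Fin.card_Ici]; rfl

/-- Each summand of `fpaSum` is at least `logb 2 (1 + 2^{-w})`. -/
lemma fpaSum_ge {c : Fin n → A} (hc : c ∈ typeClass n γ) (w : ℕ) :
    (n : ℝ) * Real.logb 2 (1 + ((2 : ℝ) ^ w)⁻¹) ≤ fpaSum γ w c := by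
  rw [fpaSum]
  calc (n : ℝ) * Real.logb 2 (1 + ((2 : ℝ) ^ w)⁻¹)
      = ∑ _i : Fin n, Real.logb 2 (1 + ((2 : ℝ) ^ w)⁻¹) := by
        rw [Finset.sum_const, Finset.card_univ, Fintype.card_fin, nsmul_eq_mul]
    _ ≤ _ := by
        apply Finset.sum_le_sum
        intro i _
        have hi : (i : ℕ) < n := i.isLt
        have hni : (0 : ℝ) < (n : ℝ) - (i : ℕ) := by
          have : ((i : ℕ) : ℝ) < (n : ℝ) := by exact_mod_cast hi
          linarith
        have hlt := prefCount_lt hc i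
        have hnum : (0 : ℝ) < (γ (c i) : ℝ) - (prefCount c i (c i) : ℝ) := by
          have : ((prefCount c i (c i)) : ℝ) < (γ (c i) : ℝ) := by exact_mod_cast hlt
          linarith
        set P : ℝ := ((γ (c i) : ℝ) - (prefCount c i (c i) : ℝ)) / ((n : ℝ) - (i : ℕ)) with hP
        have hPpos : 0 < P := div_pos hnum hni
        have hPle : P ≤ 1 := by
          rw [hP, div_le_one hni]
          have h2 := γ_le_prefCount_add hc i
          have h3 : (γ (c i) : ℝ) ≤ (prefCount c i (c i) : ℝ) + ((n - (i : ℕ) : ℕ) : ℝ) := by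
            exact_mod_cast h2
          have h4 : ((n - (i : ℕ) : ℕ) : ℝ) = (n : ℝ) - (i : ℕ) := by
            rw [Nat.cast_sub hi.le]
          linarith
        have hw : (0 : ℝ) < ((2 : ℝ) ^ w)⁻¹ := by positivity
        have hdiv : ((2 : ℝ) ^ w)⁻¹ ≤ ((2 : ℝ) ^ w)⁻¹ / P := by
          rw [le_div_iff₀ hPpos]
          nlinarith
        apply Real.logb_le_logb_of_le one_lt_two (by linarith)
        linarith

/-- The cardinality bound `|T_γ| ⬝ ∏ Q(a)^{γ a} ≤ 1`. -/
lemma card_mul_prod_le_one (hn : 1 ≤ n) (hγsum : ∑ a, γ a = n) :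
    ((typeClass n γ).card : ℝ) * ∏ a, ((γ a : ℝ) / n) ^ γ a ≤ 1 := by
  have hn0 : (0 : ℝ) < n := by exact_mod_cast hn
  have hQ1 : ∑ a, ((γ a : ℝ) / n) = 1 := by
    rw [← Finset.sum_div]
    rw [show ∑ a, ((γ a : ℝ)) = ((∑ a, γ a : ℕ) : ℝ) by push_cast; ring, hγsum]
    field_simp
  have hexp : (1 : ℝ) = ∑ f : Fin n → A, ∏ i, ((γ (f i) : ℝ) / n) := by
    calc (1 : ℝ) = (∑ a, ((γ a : ℝ) / n)) ^ n := by rw [hQ1, one_pow]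
      _ = ∏ _i : Fin n, ∑ a, ((γ a : ℝ) / n) := by
          rw [Finset.prod_const, Finset.card_univ, Fintype.card_fin]
      _ = ∑ f ∈ Fintype.piFinset (fun _ : Fin n => Finset.univ),
            ∏ i, ((γ (f i) : ℝ) / n) := Finset.prod_univ_sum _ _
      _ = _ := by rw [Fintype.piFinset_univ]
  have hfiber : ∀ c ∈ typeClass n γ,
      ∏ i, ((γ (c i) : ℝ) / n) = ∏ a, ((γ a : ℝ) / n) ^ γ a := by
    intro c hc
    rw [← Finset.prod_fiberwise' Finset.univ c (fun a => ((γ a : ℝ) / n))]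
    apply Finset.prod_congr rfl
    intro a _
    rw [Finset.prod_const, typeClass_count hc a]
  calc ((typeClass n γ).card : ℝ) * ∏ a, ((γ a : ℝ) / n) ^ γ a
      = ∑ c ∈ typeClass n γ, ∏ i, ((γ (c i) : ℝ) / n) := by
        rw [Finset.sum_congr rfl hfiber, Finset.sum_const, nsmul_eq_mul]
    _ ≤ ∑ f : Fin n → A, ∏ i, ((γ (f i) : ℝ) / n) := by
        apply Finset.sum_le_sum_of_subset_of_nonneg (Finset.subset_univ _)
        intro f _ _
        exact Finset.prod_nonneg fun i _ => by positivity
    _ = 1 := hexp.symm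

end aux

/-- Corollary 1, part 1: with `Δk` the FPA rate-loss and
    `k_FPA = ⌊log₂|T_γ| − Δk⌋`, the matching rate `R = k_FPA/n` satisfies
    `R ≤ H(Q) − log₂(1 + 2^{−w})`, where `Q(a) = n_a/n` is the `n`-type of `γ`. -/
theorem fpa_ccdm_rate_le {A : Type*} [Fintype A] [DecidableEq A]
    (n : ℕ) (hn : 1 ≤ n) (γ : A → ℕ) (hγsum : ∑ a, γ a = n) (w : ℕ)
    (Δk : ℝ)
    (hΔk : IsGreatest
      {y : ℝ | ∃ c ∈ typeClass n γ, fpaSum γ w c = y} Δk) :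
    ((⌊Real.logb 2 ((typeClass n γ).card : ℝ) - Δk⌋ : ℤ) : ℝ) / (n : ℝ) ≤
      (- ∑ a ∈ Finset.univ.filter (fun a => 0 < γ a),
          ((γ a : ℝ) / n) * Real.logb 2 ((γ a : ℝ) / n)) -
        Real.logb 2 (1 + ((2 : ℝ) ^ w)⁻¹) := by
  classical
  obtain ⟨c₀, hc₀, hfc₀⟩ := hΔk.1
  have hn0 : (0 : ℝ) < n := by exact_mod_cast hn
  set S := Finset.univ.filter (fun a => 0 < γ a) with hS
  -- restrict the product to the support
  have hprod_eq : ∏ a, ((γ a : ℝ) / n) ^ γ a = ∏ a ∈ S, ((γ a : ℝ) / n) ^ γ a := by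
    rw [hS]
    refine (Finset.prod_filter_of_ne ?_).symm
    intro a _ h
    by_contra h0
    exact h (by simp [Nat.eq_zero_of_not_pos h0])
  have hPpos : 0 < ∏ a ∈ S, ((γ a : ℝ) / n) ^ γ a := by
    apply Finset.prod_pos
    intro a ha
    have : 0 < γ a := (Finset.mem_filter.mp ha).2
    have : (0 : ℝ) < (γ a : ℝ) := by exact_mod_cast this
    positivity
  have hcard_pos : (0 : ℝ) < ((typeClass n γ).card : ℝ) := by
    have : 0 < (typeClass n γ).card := Finset.card_pos.mpr ⟨c₀, hc₀⟩
    exact_mod_cast this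
  -- entropy bound for log of the cardinality
  have hcard := card_mul_prod_le_one hn hγsum (γ := γ)
  rw [hprod_eq] at hcard
  have hcard' : ((typeClass n γ).card : ℝ) ≤ (∏ a ∈ S, ((γ a : ℝ) / n) ^ γ a)⁻¹ := by
    rw [← one_div]
    exact (le_div_iff₀ hPpos).mpr hcard
  have hlogcard : Real.logb 2 ((typeClass n γ).card : ℝ) ≤
      - ∑ a ∈ S, (γ a : ℝ) * Real.logb 2 ((γ a : ℝ) / n) := by
    calc Real.logb 2 ((typeClass n γ).card : ℝ)
        ≤ Real.logb 2 (∏ a ∈ S, ((γ a : ℝ) / n) ^ γ a)⁻¹ :=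
          Real.logb_le_logb_of_le one_lt_two hcard_pos hcard'
      _ = - Real.logb 2 (∏ a ∈ S, ((γ a : ℝ) / n) ^ γ a) := Real.logb_inv _ _
      _ = - ∑ a ∈ S, Real.logb 2 (((γ a : ℝ) / n) ^ γ a) := by
          rw [Real.logb_prod]
          intro a ha
          have : 0 < γ a := (Finset.mem_filter.mp ha).2
          have : (0 : ℝ) < (γ a : ℝ) := by exact_mod_cast this
          positivity
      _ = - ∑ a ∈ S, (γ a : ℝ) * Real.logb 2 ((γ a : ℝ) / n) := by
          congr 1
          exact Finset.sum_congr rfl fun a _ => Real.logb_pow _ _ _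
  -- lower bound on Δk
  have hΔlow : (n : ℝ) * Real.logb 2 (1 + ((2 : ℝ) ^ w)⁻¹) ≤ Δk := by
    rw [← hfc₀]; exact fpaSum_ge hc₀ w
  -- assemble
  have hfloor : ((⌊Real.logb 2 ((typeClass n γ).card : ℝ) - Δk⌋ : ℤ) : ℝ) ≤
      Real.logb 2 ((typeClass n γ).card : ℝ) - Δk := Int.floor_le _
  rw [div_le_iff₀ hn0]
  have hsum : (- ∑ a ∈ S, ((γ a : ℝ) / n) * Real.logb 2 ((γ a : ℝ) / n)) * n =
      - ∑ a ∈ S, (γ a : ℝ) * Real.logb 2 ((γ a : ℝ) / n) := by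
    rw [neg_mul, Finset.sum_mul]
    congr 1
    exact Finset.sum_congr rfl fun a _ => by field_simp
  calc ((⌊Real.logb 2 ((typeClass n γ).card : ℝ) - Δk⌋ : ℤ) : ℝ)
      ≤ Real.logb 2 ((typeClass n γ).card : ℝ) - Δk := hfloor
    _ ≤ (- ∑ a ∈ S, (γ a : ℝ) * Real.logb 2 ((γ a : ℝ) / n)) -
          (n : ℝ) * Real.logb 2 (1 + ((2 : ℝ) ^ w)⁻¹) := by linarith
    _ = ((- ∑ a ∈ S, ((γ a : ℝ) / n) * Real.logb 2 ((γ a : ℝ) / n)) -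
          Real.logb 2 (1 + ((2 : ℝ) ^ w)⁻¹)) * n := by
        rw [sub_mul, hsum]; ring
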